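/- Let F be a field, let m and n be positive integers, and let d₁ : Fin m → Fˣ and d₂ : Fin n → Fˣ be non-constant functions (so that the diagonal matrices M₁ = diag(d₁) and M₂ = diag(d₂) are non-scalar). Suppose that the Kronecker product M = M₁ ⊗ M₂, i.e. the diagonal matrix indexed by Fin m × Fin n whose (i,j) diagonal entry is d₁(i)·d₂(j), has almost simple spectrum: there is at most one c ∈ F with #{(i,j) : d₁(i)·d₂(j) = c} ≥ 2. Then d₁ and d₂ are injective, i.e. M₁ and M₂ have simple spectrum. -/
import Mathlib


open scoped Classical in
/-- **Lemma 2.1(1).** If the Kronecker product of two non-scalar diagonal matrices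
`diag d₁` and `diag d₂` has almost simple spectrum (at most one eigenvalue of
multiplicity at least 2), then `d₁` and `d₂` are injective, i.e. the factors have
simple spectrum. -/
theorem kronecker_almost_simple_spectrum_factors_simple
    {F : Type*} [Field F] {m n : ℕ} (hm : 0 < m) (hn : 0 < n)
    (d₁ : Fin m → Fˣ) (d₂ : Fin n → Fˣ)
    (hd₁ : ¬ ∃ c : Fˣ, ∀ i, d₁ i = c) (hd₂ : ¬ ∃ c : Fˣ, ∀ j, d₂ j = c)
    (hAS : ∀ c c' : F,
      2 ≤ (Finset.univ.filter
        (fun p : Fin m × Fin n => ((d₁ p.1 : F) * (d₂ p.2 : F)) = c)).card →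
      2 ≤ (Finset.univ.filter
        (fun p : Fin m × Fin n => ((d₁ p.1 : F) * (d₂ p.2 : F)) = c')).card →
      c = c') :
    Function.Injective d₁ ∧ Function.Injective d₂ := by
  have h2 : ∀ (c : F) (p q : Fin m × Fin n), p ≠ q →
      (d₁ p.1 : F) * d₂ p.2 = c → (d₁ q.1 : F) * d₂ q.2 = c →
      2 ≤ (Finset.univ.filter
        (fun p : Fin m × Fin n => ((d₁ p.1 : F) * (d₂ p.2 : F)) = c)).card := by
    intro c p q hpq hp hq
    exact Finset.one_lt_card.mpr ⟨p, by simp [hp], q, by simp [hq], hpq⟩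
  constructor
  · intro i i' hii
    by_contra hne
    obtain ⟨j, j', hjj⟩ : ∃ j j', d₂ j ≠ d₂ j' := by
      by_contra hc
      push_neg at hc
      exact hd₂ ⟨d₂ ⟨0, hn⟩, fun j => hc j ⟨0, hn⟩⟩
    have hA := h2 ((d₁ i : F) * d₂ j) (i, j) (i', j)
      (fun h => hne (Prod.ext_iff.mp h).1) rfl (by rw [← hii])
    have hB := h2 ((d₁ i : F) * d₂ j') (i, j') (i', j')
      (fun h => hne (Prod.ext_iff.mp h).1) rfl (by rw [← hii])
    have := hAS _ _ hA hB
    exact hjj (Units.ext (mul_left_cancel₀ (Units.ne_zero (d₁ i)) this))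
  · intro j j' hjj
    by_contra hne
    obtain ⟨i, i', hii⟩ : ∃ i i', d₁ i ≠ d₁ i' := by
      by_contra hc
      push_neg at hc
      exact hd₁ ⟨d₁ ⟨0, hm⟩, fun i => hc i ⟨0, hm⟩⟩
    have hA := h2 ((d₁ i : F) * d₂ j) (i, j) (i, j')
      (fun h => hne (Prod.ext_iff.mp h).2) rfl (by rw [← hjj])
    have hB := h2 ((d₁ i' : F) * d₂ j) (i', j) (i', j')
      (fun h => hne (Prod.ext_iff.mp h).2) rfl (by rw [← hjj])
    have := hAS _ _ hA hB
    exact hii (Units.ext (mul_right_cancel₀ (Units.ne_zero (d₂ j)) this))
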